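/- arXiv:2303.05196 — 6 statements merged into one kernel-verified Lean document; each statement's English description precedes it below -/
import Mathlib

section
/- In an extremally disconnected topological space X (a space in which the closure of every open set is open), the intersection of two semi-open sets is semi-open, where a set A is semi-open if A ⊆ Cl(Int(A)). -/
open Set

variable {X : Type*} [TopologicalSpace X]

/-- A set is semi-open if it is contained in the closure of its interior. -/
def SemiOpen (A : Set X) : Prop := A ⊆ closure (interior A)

/-- A family of sets is a semi-open cover if all members are semi-open and it covers the space. -/
def IsSemiOpenCover (U : Set (Set X)) : Prop := (∀ A ∈ U, SemiOpen A) ∧ ⋃₀ U = univ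

/-- The semi-Menger property `S_fin(sO, sO)`. -/
def SFinSO (X : Type*) [TopologicalSpace X] : Prop :=
  ∀ U : ℕ → Set (Set X), (∀ n, IsSemiOpenCover (U n)) →
    ∃ V : ℕ → Set (Set X), (∀ n, V n ⊆ U n ∧ (V n).Finite) ∧ ⋃₀ (⋃ n, V n) = univ

/-- The semi-Rothberger property `S_1(sO, sO)`. -/
def S1SO (X : Type*) [TopologicalSpace X] : Prop :=
  ∀ U : ℕ → Set (Set X), (∀ n, IsSemiOpenCover (U n)) →
    ∃ V : ℕ → Set X, (∀ n, V n ∈ U n) ∧ (⋃ n, V n) = univ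

/-- A strategy for Alice in `G_fin(sO,sO)` (a function from finite histories of Bob's moves
to semi-open covers) is winning if every play following it is lost by Bob. -/
def AliceWinningFin (σ : List (Set (Set X)) → Set (Set X)) : Prop :=
  (∀ h, IsSemiOpenCover (σ h)) ∧
  ∀ b : ℕ → Set (Set X),
    (∀ n, b n ⊆ σ (List.ofFn fun i : Fin n => b i) ∧ (b n).Finite) →
    ⋃₀ (⋃ n, b n) ≠ univ

/-- A strategy for Alice in `G_1(sO,sO)` is winning if every play following it is lost by Bob. -/
def AliceWinningOne (σ : List (Set X) → Set (Set X)) : Prop :=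
  (∀ h, IsSemiOpenCover (σ h)) ∧
  ∀ b : ℕ → Set X,
    (∀ n, b n ∈ σ (List.ofFn fun i : Fin n => b i)) →
    (⋃ n, b n) ≠ univ

/-- A family indexed by `ι` is a tail semi-open cover if the intersection of every cofinite
subfamily is semi-open and these intersections cover the space. -/
def TailSemiCover {ι : Type*} (U : ι → Set X) : Prop :=
  (∀ I : Set ι, Iᶜ.Finite → SemiOpen (⋂ i ∈ I, U i)) ∧
  ∀ x : X, ∃ I : Set ι, Iᶜ.Finite ∧ x ∈ ⋂ i ∈ I, U i

theorem stmt0 [ExtremallyDisconnected X] (A B : Set X)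
    (hA : SemiOpen A) (hB : SemiOpen B) : SemiOpen (A ∩ B) := by
  have hU : IsOpen (interior A) := isOpen_interior
  have hV : IsOpen (interior B) := isOpen_interior
  have hclU : IsOpen (closure (interior A)) :=
    ExtremallyDisconnected.open_closure _ hU
  have h1 : A ∩ B ⊆ closure (interior A) ∩ closure (interior B) :=
    inter_subset_inter hA hB
  have h2 : closure (interior A) ∩ closure (interior B) ⊆
      closure (closure (interior A) ∩ interior B) := by
    intro x hx
    exact hclU.inter_closure ⟨hx.1, hx.2⟩
  have h3 : closure (interior A) ∩ interior B ⊆ closure (interior A ∩ interior B) :=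
    hV.closure_inter
  have h4 : interior A ∩ interior B ⊆ interior (A ∩ B) := by
    rw [interior_inter]
  intro x hx
  have hx2 := h2 (h1 hx)
  have hx3 : x ∈ closure (closure (interior A ∩ interior B)) :=
    closure_mono h3 hx2
  rw [closure_closure] at hx3
  exact closure_mono h4 hx3
end

section
/- The semi-Menger property is preserved by countable unions: if X = ⋃_{k∈ℕ} X_k where each subspace X_k satisfies S_fin(sO, sO) with respect to semi-open covers of X, then X satisfies S_fin(sO, sO). -/
open Set

variable {X : Type*} [TopologicalSpace X]

theorem stmt5 (Xk : ℕ → Set X) (hcov : ⋃ k, Xk k = univ)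
    (h : ∀ k, ∀ U : ℕ → Set (Set X), (∀ n, IsSemiOpenCover (U n)) →
      ∃ V : ℕ → Set (Set X), (∀ n, V n ⊆ U n ∧ (V n).Finite) ∧ Xk k ⊆ ⋃₀ (⋃ n, V n)) :
    SFinSO X := by
  intro U hU
  set e : ℕ × ℕ ≃ ℕ := Denumerable.eqv (ℕ × ℕ) with he
  have hVk : ∀ k, ∃ V : ℕ → Set (Set X), (∀ n, V n ⊆ U (e (k, n)) ∧ (V n).Finite) ∧
      Xk k ⊆ ⋃₀ (⋃ n, V n) := fun k => h k (fun n => U (e (k, n))) (fun n => hU _)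
  choose V hV hVcov using hVk
  refine ⟨fun m => V (e.symm m).1 (e.symm m).2, fun m => ?_, ?_⟩
  · have := hV (e.symm m).1 (e.symm m).2
    rwa [Prod.mk.eta, Equiv.apply_symm_apply] at this
  · apply eq_univ_of_univ_subset
    rw [← hcov]
    refine iUnion_subset fun k => (hVcov k).trans (sUnion_subset_sUnion ?_)
    refine iUnion_subset fun n => ?_
    exact subset_iUnion_of_subset (e (k, n)) (by simp)
end

section
/- If Alice (player One) does not have a winning strategy in the game G_fin(sO, sO) on X, then X satisfies S_fin(sO, sO). -/
open Set

variable {X : Type*} [TopologicalSpace X]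

theorem stmt7 (h : ¬ ∃ σ : List (Set (Set X)) → Set (Set X), AliceWinningFin σ) :
    SFinSO X := by
  by_contra hS
  apply h
  unfold SFinSO at hS
  push_neg at hS
  obtain ⟨U, hU, hbad⟩ := hS
  refine ⟨fun hist => U hist.length, fun _ => hU _, fun b hb => ?_⟩
  have hb' : ∀ n, b n ⊆ U n ∧ (b n).Finite := by
    intro n
    have := hb n
    simpa using this
  exact hbad b hb'
end

section
/- If Alice (player One) does not have a winning strategy in the game G_1(sO, sO) on X, then X satisfies S_1(sO, sO). -/
open Set

variable {X : Type*} [TopologicalSpace X]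

theorem stmt8 (h : ¬ ∃ σ : List (Set X) → Set (Set X), AliceWinningOne σ) :
    S1SO X := by
  intro U hU
  push_neg at h
  have hσ := h (fun hist => U hist.length)
  unfold AliceWinningOne at hσ
  push_neg at hσ
  obtain ⟨b, hb, hcov⟩ := hσ (fun hist => hU hist.length)
  refine ⟨b, fun n => ?_, hcov⟩
  simpa using hb n
end

section
/- Let X be an extremally disconnected space satisfying S_fin(sO, sO). Then Alice (player One) does not have a winning strategy in the game G_fin(sO, sO) on X. -/
open Set

variable {X : Type*} [TopologicalSpace X]

/-! ### Auxiliary lemmas about semi-open sets -/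

lemma stmt9_semiOpen_empty : SemiOpen (∅ : Set X) := empty_subset _

lemma stmt9_semiOpen_univ : SemiOpen (univ : Set X) := by
  simp [SemiOpen]

lemma stmt9_semiOpen_sUnion {S : Set (Set X)} (h : ∀ A ∈ S, SemiOpen A) :
    SemiOpen (⋃₀ S) := by
  rintro x ⟨A, hA, hxA⟩
  exact closure_mono (interior_mono (subset_sUnion_of_mem hA)) (h A hA hxA)

lemma stmt9_semiOpen_union {A B : Set X} (hA : SemiOpen A) (hB : SemiOpen B) :
    SemiOpen (A ∪ B) := by
  have := stmt9_semiOpen_sUnion (S := {A, B}) (by rintro C (rfl | rfl) <;> assumption)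
  simpa using this

lemma stmt9_semiOpen_inter [ExtremallyDisconnected X] {A B : Set X}
    (hA : SemiOpen A) (hB : SemiOpen B) : SemiOpen (A ∩ B) := by
  intro x hx
  have h1 : x ∈ closure (interior A) := hA hx.1
  have h2 : x ∈ closure (interior B) := hB hx.2
  have key : x ∈ closure (interior A ∩ interior B) := by
    rw [mem_closure_iff]
    intro o ho hxo
    have ho' : IsOpen (o ∩ closure (interior A)) :=
      ho.inter (ExtremallyDisconnected.open_closure _ isOpen_interior)
    obtain ⟨y, ⟨hyo, hycl⟩, hyB⟩ := mem_closure_iff.mp h2 _ ho' ⟨hxo, h1⟩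
    have hW : IsOpen (o ∩ interior B) := ho.inter isOpen_interior
    obtain ⟨z, ⟨hzo, hzB⟩, hzA⟩ := mem_closure_iff.mp hycl _ hW ⟨hyo, hyB⟩
    exact ⟨z, hzo, hzA, hzB⟩
  refine closure_mono ?_ key
  rw [interior_inter]

lemma stmt9_semiOpen_sInter [ExtremallyDisconnected X] {S : Set (Set X)} (hfin : S.Finite) :
    (∀ A ∈ S, SemiOpen A) → SemiOpen (⋂₀ S) := by
  refine Set.Finite.induction_on _ hfin (fun _ => ?_) ?_
  · simpa using stmt9_semiOpen_univ
  · intro A S _ _ ih h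
    rw [sInter_insert]
    exact stmt9_semiOpen_inter (h A (mem_insert _ _))
      (ih fun B hB => h B (mem_insert_of_mem _ hB))

/-- Countable subcover from `SFinSO`. -/
lemma stmt9_countable_subcover (h : SFinSO X) (hne : Nonempty X) {U : Set (Set X)}
    (hU : IsSemiOpenCover U) : ∃ e : ℕ → Set X, (∀ i, e i ∈ U) ∧ (⋃ i, e i) = univ := by
  obtain ⟨V, hV1, hV2⟩ := h (fun _ => U) (fun _ => hU)
  have hsub : (⋃ n, V n) ⊆ U := iUnion_subset fun n => (hV1 n).1
  have hcnt : (⋃ n, V n).Countable := countable_iUnion fun n => (hV1 n).2.countable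
  have hnon : (⋃ n, V n).Nonempty := by
    rcases eq_empty_or_nonempty (⋃ n, V n) with hcon | hnon
    · rw [hcon] at hV2
      simp only [sUnion_empty] at hV2
      obtain ⟨x⟩ := hne
      exact absurd (hV2 ▸ mem_univ x) (notMem_empty x)
    · exact hnon
  obtain ⟨f, hf⟩ := hcnt.exists_eq_range hnon
  refine ⟨f, fun i => hsub (hf ▸ mem_range_self i), ?_⟩
  rw [← sUnion_range, ← hf, hV2]

/-! ### The tree machinery associated to a strategy -/

section Tree

variable (E : List (Set (Set X)) → ℕ → Set X)

/-- Bob's canonical move: the first `m+1` sets of the canonical countable subcover. -/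
def stmt9Mv (h : List (Set (Set X))) (m : ℕ) : Set (Set X) := E h '' Set.Iic m

/-- The history determined by a (reversed) node of the tree of plays. -/
def stmt9Hst : List ℕ → List (Set (Set X))
  | [] => []
  | m :: ρ => stmt9Hst ρ ++ [stmt9Mv E (stmt9Hst ρ) m]

/-- The union of Bob's canonical move. -/
def stmt9B (h : List (Set (Set X))) (m : ℕ) : Set X := ⋃₀ (stmt9Mv E h m)

/-- The part of the space covered along a node. -/
def stmt9Cov : List ℕ → Set X
  | [] => ∅
  | m :: ρ => stmt9Cov ρ ∪ stmt9B E (stmt9Hst E ρ) m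

/-- Points whose avoidance tree up to depth `K` is bounded by `n`. -/
def stmt9G (K n : ℕ) : Set X :=
  {x | ∀ ρ : List ℕ, ρ.length ≤ K → x ∉ stmt9Cov E ρ → ∀ m ∈ ρ, m < n}

/-- Bounded nodes of depth `< K`. -/
def stmt9Box (K n : ℕ) : Set (List ℕ) := {ρ | ρ.length < K ∧ ∀ m ∈ ρ, m < n}

/-- A semi-open presentation of `stmt9G`. -/
def stmt9F (K n : ℕ) : Set X :=
  ⋂₀ ((fun ρ => stmt9Cov E ρ ∪ stmt9B E (stmt9Hst E ρ) n) '' stmt9Box K n)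

lemma stmt9B_semiOpen (hEso : ∀ h i, SemiOpen (E h i)) (h : List (Set (Set X))) (m : ℕ) :
    SemiOpen (stmt9B E h m) := by
  apply stmt9_semiOpen_sUnion
  rintro A ⟨i, _, rfl⟩
  exact hEso h i

lemma stmt9B_mono (h : List (Set (Set X))) {m m' : ℕ} (hmm : m ≤ m') :
    stmt9B E h m ⊆ stmt9B E h m' :=
  sUnion_subset_sUnion (image_mono (Iic_subset_Iic.mpr hmm))

lemma stmt9Cov_semiOpen (hEso : ∀ h i, SemiOpen (E h i)) :
    ∀ ρ : List ℕ, SemiOpen (stmt9Cov E ρ)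
  | [] => stmt9_semiOpen_empty
  | m :: ρ => stmt9_semiOpen_union (stmt9Cov_semiOpen hEso ρ) (stmt9B_semiOpen E hEso _ m)

lemma stmt9Box_finite : ∀ K n : ℕ, (stmt9Box K n).Finite := by
  intro K
  induction K with
  | zero =>
    intro n
    refine Set.Finite.subset finite_empty ?_
    rintro ρ ⟨hlen, -⟩
    exact absurd hlen (Nat.not_lt_zero _)
  | succ K ih =>
    intro n
    refine Set.Finite.subset (((Set.finite_Iio n).image2 List.cons (ih n)).insert []) ?_
    rintro ρ ⟨hlen, hco⟩
    cases ρ with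
    | nil => exact mem_insert _ _
    | cons m ρ' =>
      refine mem_insert_of_mem _ (mem_image2_of_mem ?_ ?_)
      · exact hco m List.mem_cons_self
      · exact ⟨Nat.lt_of_succ_lt_succ hlen, fun m' hm' => hco m' (List.mem_cons_of_mem _ hm')⟩

lemma stmt9F_semiOpen [ExtremallyDisconnected X] (hEso : ∀ h i, SemiOpen (E h i)) (K n : ℕ) :
    SemiOpen (stmt9F E K n) := by
  apply stmt9_semiOpen_sInter ((stmt9Box_finite K n).image _)
  rintro A ⟨ρ, -, rfl⟩
  exact stmt9_semiOpen_union (stmt9Cov_semiOpen E hEso ρ) (stmt9B_semiOpen E hEso _ n)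

lemma stmt9F_subset_G (K n : ℕ) : stmt9F E K n ⊆ stmt9G E K n := by
  intro x hx ρ
  induction ρ with
  | nil => intro _ _ m hm; simp at hm
  | cons m ρ' ih =>
    intro hlen hncov m' hm'
    have hncov' : x ∉ stmt9Cov E ρ' := fun hc => hncov (Or.inl hc)
    have hlen1 : ρ'.length + 1 ≤ K := by simpa using hlen
    have ihρ' : ∀ m'' ∈ ρ', m'' < n := ih (Nat.le_of_succ_le hlen1) hncov'
    have hbox : ρ' ∈ stmt9Box K n := ⟨Nat.lt_of_succ_le hlen1, ihρ'⟩
    have hconj : x ∈ stmt9Cov E ρ' ∪ stmt9B E (stmt9Hst E ρ') n :=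
      hx _ ⟨ρ', hbox, rfl⟩
    have hxB : x ∈ stmt9B E (stmt9Hst E ρ') n := hconj.resolve_left hncov'
    have hhead : m < n := by
      by_contra hge
      push_neg at hge
      exact hncov (Or.inr (stmt9B_mono E _ hge hxB))
    rcases List.mem_cons.mp hm' with rfl | hmem
    · exact hhead
    · exact ihρ' m' hmem

lemma stmt9G_subset_F (K n : ℕ) : stmt9G E K n ⊆ stmt9F E K n := by
  intro x hx
  rintro A ⟨ρ, ⟨hlen, -⟩, rfl⟩
  by_contra hnot
  have h1 : x ∉ stmt9Cov E ρ := fun hc => hnot (Or.inl hc)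
  have h2 : x ∉ stmt9B E (stmt9Hst E ρ) n := fun hc => hnot (Or.inr hc)
  have hx' : x ∉ stmt9Cov E (n :: ρ) := by
    rintro (hc | hc)
    exacts [h1 hc, h2 hc]
  have := hx (n :: ρ) (by simpa using hlen) hx' n List.mem_cons_self
  exact lt_irrefl n this

lemma stmt9G_mono (K : ℕ) {n n' : ℕ} (hnn : n ≤ n') : stmt9G E K n ⊆ stmt9G E K n' :=
  fun _x hx ρ hl hc m hm => lt_of_lt_of_le (hx ρ hl hc m hm) hnn

lemma stmt9G_cover (hEcov : ∀ h, (⋃ i, E h i) = univ) (x : X) :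
    ∀ K : ℕ, ∃ n, x ∈ stmt9G E K n := by
  intro K
  induction K with
  | zero =>
    refine ⟨1, fun ρ hl _ m hm => ?_⟩
    have : ρ = [] := List.length_eq_zero_iff.mp (Nat.le_zero.mp hl)
    subst this
    simp at hm
  | succ K ih =>
    classical
    obtain ⟨n, hn⟩ := ih
    have hBx : ∀ ρ : List ℕ, ∃ i, x ∈ stmt9B E (stmt9Hst E ρ) i := by
      intro ρ
      have hxu : x ∈ ⋃ i, E (stmt9Hst E ρ) i := (hEcov (stmt9Hst E ρ)) ▸ mem_univ x
      obtain ⟨i, hi⟩ := mem_iUnion.mp hxu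
      exact ⟨i, ⟨E (stmt9Hst E ρ) i, ⟨i, self_mem_Iic, rfl⟩, hi⟩⟩
    choose I hI using hBx
    have hfin : (stmt9Box (K + 1) n).Finite := stmt9Box_finite _ _
    refine ⟨max n (1 + hfin.toFinset.sup I), ?_⟩
    intro ρ hlen hncov m hm
    cases ρ with
    | nil => simp at hm
    | cons mh ρ' =>
      have hncov' : x ∉ stmt9Cov E ρ' := fun hc => hncov (Or.inl hc)
      have hlen1 : ρ'.length + 1 ≤ K + 1 := by simpa using hlen
      have hcoords : ∀ m'' ∈ ρ', m'' < n := hn ρ' (Nat.le_of_succ_le_succ hlen1) hncov'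
      have hbox : ρ' ∈ stmt9Box (K + 1) n :=
        ⟨Nat.lt_succ_of_le (Nat.le_of_succ_le_succ hlen1), hcoords⟩
      have hmh : mh < I ρ' := by
        by_contra hge
        push_neg at hge
        exact hncov (Or.inr (stmt9B_mono E _ hge (hI ρ')))
      have hIle : I ρ' ≤ hfin.toFinset.sup I :=
        Finset.le_sup (hfin.mem_toFinset.mpr hbox)
      rcases List.mem_cons.mp hm with rfl | hmem
      · exact lt_of_lt_of_le (lt_of_lt_of_le hmh (by omega)) (le_max_right _ _)
      · exact lt_of_lt_of_le (hcoords m hmem) (le_max_left _ _)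

/-- The sequence of nodes Bob actually plays. -/
def stmt9Rho (nk : ℕ → ℕ) : ℕ → List ℕ
  | 0 => []
  | j + 1 => nk j :: stmt9Rho nk j

lemma stmt9Rho_length (nk : ℕ → ℕ) : ∀ j, (stmt9Rho nk j).length = j
  | 0 => rfl
  | j + 1 => by simp [stmt9Rho, stmt9Rho_length nk j]

end Tree

theorem stmt9 [ExtremallyDisconnected X] (h : SFinSO X) :
    ¬ ∃ σ : List (Set (Set X)) → Set (Set X), AliceWinningFin σ := by
  rintro ⟨σ, hcov, hwin⟩
  rcases isEmpty_or_nonempty X with hemp | hne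
  · -- the empty space: Bob plays nothing and still covers everything
    have huniv : (univ : Set X) = ∅ := univ_eq_empty_iff.mpr hemp
    refine hwin (fun _ => ∅) (fun n => ⟨empty_subset _, finite_empty⟩) ?_
    simp [huniv]
  · classical
    -- canonical countable subcovers
    have hEx : ∀ hist : List (Set (Set X)),
        ∃ e : ℕ → Set X, (∀ i, e i ∈ σ hist) ∧ (⋃ i, e i) = univ :=
      fun hist => stmt9_countable_subcover h hne (hcov hist)
    choose E hE1 hE2 using hEx
    have hEso : ∀ hist i, SemiOpen (E hist i) := fun hist i => (hcov hist).1 _ (hE1 hist i)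
    -- the covers fed to S_fin
    set U : ℕ → Set (Set X) := fun k => {A | ∃ n, A = stmt9F E (k + 1) n} with hU
    have hUcov : ∀ k, IsSemiOpenCover (U k) := by
      intro k
      constructor
      · rintro A ⟨n, rfl⟩
        exact stmt9F_semiOpen E hEso _ _
      · apply eq_univ_of_forall
        intro x
        obtain ⟨n, hn⟩ := stmt9G_cover E hE2 x (k + 1)
        exact ⟨stmt9F E (k + 1) n, ⟨n, rfl⟩, stmt9G_subset_F E _ _ hn⟩
    obtain ⟨V, hV1, hV2⟩ := h U hUcov
    -- extraction of indices
    set nk : ℕ → ℕ := fun k => ((hV1 k).2.toFinset).sup fun A =>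
      if hA : ∃ n, A = stmt9F E (k + 1) n then Classical.choose hA else 0 with hnk
    have hVG : ∀ k, ∀ A ∈ V k, A ⊆ stmt9G E (k + 1) (nk k) := by
      intro k A hA
      have hAU : ∃ n, A = stmt9F E (k + 1) n := (hV1 k).1 hA
      have hch : A = stmt9F E (k + 1) (Classical.choose hAU) := Classical.choose_spec hAU
      have hle : (if hA' : ∃ n, A = stmt9F E (k + 1) n then Classical.choose hA' else 0)
          ≤ nk k := by
        rw [hnk]
        exact Finset.le_sup
          (f := fun A => if hA : ∃ n, A = stmt9F E (k + 1) n then Classical.choose hA else 0)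
          ((hV1 k).2.mem_toFinset.mpr hA)
      rw [dif_pos hAU] at hle
      calc A = stmt9F E (k + 1) (Classical.choose hAU) := hch
        _ ⊆ stmt9G E (k + 1) (Classical.choose hAU) := stmt9F_subset_G E _ _
        _ ⊆ stmt9G E (k + 1) (nk k) := stmt9G_mono E _ hle
    -- Bob's play
    set b : ℕ → Set (Set X) := fun j => stmt9Mv E (stmt9Hst E (stmt9Rho nk j)) (nk j) with hb
    have hHm : ∀ j, (List.ofFn fun i : Fin j => b i) = stmt9Hst E (stmt9Rho nk j) := by
      intro j
      induction j with
      | zero => simp [stmt9Hst, stmt9Rho]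
      | succ j ih =>
        rw [List.ofFn_succ']
        have hcast : (fun i : Fin j => b (i.castSucc : Fin (j + 1)).val) = fun i : Fin j => b i := by
          funext i
          simp
        simp only [List.concat_eq_append, Fin.val_last, hcast, ih]
        rfl
    have hleg : ∀ j, b j ⊆ σ (List.ofFn fun i : Fin j => b i) ∧ (b j).Finite := by
      intro j
      constructor
      · rw [hHm j]
        rintro A ⟨i, -, rfl⟩
        exact hE1 _ i
      · exact (Set.finite_Iic _).image _
    -- Bob covers everything
    have hkill : ∀ x : X, x ∈ ⋃₀ (⋃ j, b j) := by
      intro x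
      have hxU : x ∈ ⋃₀ (⋃ k, V k) := hV2 ▸ mem_univ x
      obtain ⟨A, hAmem, hxA⟩ := hxU
      obtain ⟨k, hAk⟩ := mem_iUnion.mp hAmem
      have hxG : x ∈ stmt9G E (k + 1) (nk k) := hVG k A hAk hxA
      have hxCov : x ∈ stmt9Cov E (stmt9Rho nk (k + 1)) := by
        by_contra hnc
        have hlen : (stmt9Rho nk (k + 1)).length ≤ k + 1 := by
          rw [stmt9Rho_length]
        have := hxG _ hlen hnc (nk k) (by simp [stmt9Rho])
        exact lt_irrefl _ this
      have hCovPlay : ∀ j, stmt9Cov E (stmt9Rho nk j) ⊆ ⋃₀ (⋃ i, b i) := by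
        intro j
        induction j with
        | zero =>
          intro y hy
          simp [stmt9Cov, stmt9Rho] at hy
        | succ j ih =>
          intro y hy
          rcases hy with hy | hy
          · exact ih hy
          · obtain ⟨A', hA', hyA'⟩ := hy
            exact ⟨A', mem_iUnion.mpr ⟨j, hA'⟩, hyA'⟩
      exact hCovPlay (k + 1) hxCov
    exact hwin b hleg (eq_univ_of_forall hkill)
end

section
/- If X satisfies S_fin(sO, sO) (with respect to semi-open covers of the product), then the product space X × ℕ (with ℕ discrete) also satisfies S_fin with respect to covers by sets of the form U × {n} with U semi-open in X, as a countable union of copies of X. -/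
open Set

variable {X : Type*} [TopologicalSpace X]

theorem stmt15 (h : SFinSO X)
    (U : ℕ → Set (Set (X × ℕ)))
    (hU : ∀ n, (∀ A ∈ U n, ∃ (B : Set X) (m : ℕ), SemiOpen B ∧ A = B ×ˢ ({m} : Set ℕ)) ∧
      ⋃₀ U n = univ) :
    ∃ V : ℕ → Set (Set (X × ℕ)), (∀ n, V n ⊆ U n ∧ (V n).Finite) ∧
      ⋃₀ (⋃ n, V n) = univ := by
  have key : ∀ m : ℕ, ∃ V : ℕ → Set (Set X),
      (∀ n, V n ⊆ {B | SemiOpen B ∧ B ×ˢ ({m} : Set ℕ) ∈ U (n + m)} ∧ (V n).Finite) ∧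
      ⋃₀ (⋃ n, V n) = univ := by
    intro m
    apply h
    intro n
    constructor
    · intro B hB; exact hB.1
    · ext x
      simp only [mem_univ, iff_true, mem_sUnion]
      have hx : (x, m) ∈ ⋃₀ U (n + m) := by rw [(hU (n + m)).2]; trivial
      obtain ⟨A, hA, hxA⟩ := hx
      obtain ⟨B, m', hB, rfl⟩ := (hU (n + m)).1 A hA
      have hm : m' = m := by have h2 := hxA.2; simp at h2; omega
      subst hm
      exact ⟨B, ⟨hB, hA⟩, hxA.1⟩
  choose V hV1 hV2 using key
  refine ⟨fun n => ⋃ m ∈ Finset.range (n + 1),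
      (fun B => B ×ˢ ({m} : Set ℕ)) '' (V m (n - m)), ?_, ?_⟩
  · intro n
    constructor
    · intro A hA
      simp only [mem_iUnion, mem_image, Finset.mem_range] at hA
      obtain ⟨m, hm, B, hB, rfl⟩ := hA
      have hmn : m ≤ n := Nat.lt_succ_iff.mp hm
      have h2 := ((hV1 m (n - m)).1 hB).2
      rwa [Nat.sub_add_cancel hmn] at h2
    · apply Set.Finite.biUnion (Finset.range (n + 1)).finite_toSet
      intro m _
      exact ((hV1 m (n - m)).2).image _
  · ext ⟨x, m⟩
    simp only [mem_univ, iff_true, mem_sUnion, mem_iUnion]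
    have hx : x ∈ ⋃₀ (⋃ n, V m n) := by rw [hV2 m]; trivial
    obtain ⟨B, hB, hxB⟩ := hx
    simp only [mem_iUnion] at hB
    obtain ⟨n, hBn⟩ := hB
    refine ⟨B ×ˢ ({m} : Set ℕ), ⟨n + m, ?_⟩, hxB, rfl⟩
    simp only [mem_iUnion, mem_image, Finset.mem_range]
    refine ⟨m, Nat.lt_succ_of_le (Nat.le_add_left m n), B, ?_, rfl⟩
    simpa using hBn
end
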